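/- The homotopy H° = Σ_{t=1}^n (g'f')^{⊗(t−1)} ⊗ h' ⊗ 1^{⊗(n−t)} on the tensor coalgebra T*_c(sĀ) satisfies the coalgebra homotopy condition Δ_B ∘ H° = (H° ⊗ 1 + G°F° ⊗ H°) ∘ Δ_B, where Δ_B is the deconcatenation coproduct Δ_B[a₁,…,a_n] = Σ_{i=0}^{n} [a₁,…,a_i] ⊠ [a_{i+1},…,a_n]. -/

import Mathlib

/-!
Split the sum defining `H°_{a+b}` according to whether the position `t` of `h'` lies among the
first `a` tensor factors or the last `b`. In the first case the last `b` factors are identities,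
which gives `H°_a ⊗ 1`; in the second case the first `a` factors are all `g'f'`, which gives
`(g'f')^{⊗a} ⊗ H°_b`.
-/

open scoped TensorProduct

noncomputable section

variable {k : Type*} [Field k] [CharZero k]
variable {A : Type*} [AddCommGroup A] [Module k A]

/-- `H° = Σ_{t=1}^n (g'f')^{⊗(t-1)} ⊗ h' ⊗ 1^{⊗(n-t)}` on the `n`-th tensor component of
the tensor coalgebra. -/
def Hcirc (f : A →ₗ[k] A) (g : A →ₗ[k] A) (h : A →ₗ[k] A) (n : ℕ) :
    (⨂[k] (_ : Fin n), A) →ₗ[k] ⨂[k] (_ : Fin n), A :=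
  ∑ t : Fin n, PiTensorProduct.map
    (fun i => if i < t then g ∘ₗ f else if i = t then h else LinearMap.id)

/-- The canonical identification `A^{⊗a} ⊗ A^{⊗b} ≅ A^{⊗(a+b)}` (concatenation), i.e. the
component of the deconcatenation coproduct `Δ_B`. -/
def concatEquiv (a b : ℕ) :
    ((⨂[k] (_ : Fin a), A) ⊗[k] (⨂[k] (_ : Fin b), A)) ≃ₗ[k] ⨂[k] (_ : Fin (a + b)), A :=
  (PiTensorProduct.tmulEquiv k A).trans
    (PiTensorProduct.reindex k (fun _ : Fin a ⊕ Fin b => A) finSumFinEquiv)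

namespace Hcirc

variable {M : Type*} {a b : ℕ}

def factor (p q r : M) {n : ℕ} (t i : Fin n) : M :=
  if i < t then p else if i = t then q else r

theorem eq_sum_map_factor (f g h : A →ₗ[k] A) (n : ℕ) :
    Hcirc f g h n = ∑ t : Fin n, PiTensorProduct.map (factor (g ∘ₗ f) h LinearMap.id t) :=
  rfl

variable (p q r : M)

theorem factor_castAdd_castAdd (t i : Fin a) :
    factor p q r (Fin.castAdd b t) (Fin.castAdd b i) = factor p q r t i := by
  simp only [factor, Fin.castAdd_inj, Fin.lt_def, Fin.val_castAdd]

theorem factor_castAdd_natAdd (t : Fin a) (i : Fin b) :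
    factor p q r (Fin.castAdd b t) (Fin.natAdd a i) = r := by
  have := t.isLt
  rw [factor, if_neg (by simp only [Fin.lt_def, Fin.val_castAdd, Fin.val_natAdd]; omega),
    if_neg (by simp only [Fin.ext_iff, Fin.val_castAdd, Fin.val_natAdd]; omega)]

theorem factor_natAdd_castAdd (t : Fin b) (i : Fin a) :
    factor p q r (Fin.natAdd a t) (Fin.castAdd b i) = p := by
  have := i.isLt
  rw [factor, if_pos (by simp only [Fin.lt_def, Fin.val_castAdd, Fin.val_natAdd]; omega)]

theorem factor_natAdd_natAdd (t i : Fin b) :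
    factor p q r (Fin.natAdd a t) (Fin.natAdd a i) = factor p q r t i := by
  simp only [factor, Fin.natAdd_lt_natAdd_iff, Fin.natAdd_inj]

end Hcirc

theorem concatEquiv_tprod {a b : ℕ} (x : Fin a → A) (y : Fin b → A) :
    concatEquiv a b (PiTensorProduct.tprod k x ⊗ₜ[k] PiTensorProduct.tprod k y) =
      PiTensorProduct.tprod k (Fin.append x y) := by
  simp only [concatEquiv, LinearEquiv.trans_apply, PiTensorProduct.tmulEquiv_apply,
    PiTensorProduct.reindex_tprod]
  congr 1
  funext i
  refine Fin.addCases (fun j => ?_) (fun j => ?_) i <;> simp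

theorem map_concatEquiv_tprod {a b : ℕ} (F : Fin (a + b) → A →ₗ[k] A)
    (x : Fin a → A) (y : Fin b → A) :
    PiTensorProduct.map F (concatEquiv a b
        (PiTensorProduct.tprod k x ⊗ₜ[k] PiTensorProduct.tprod k y)) =
      concatEquiv a b
        (PiTensorProduct.map (fun j => F (Fin.castAdd b j)) (PiTensorProduct.tprod k x) ⊗ₜ[k]
          PiTensorProduct.map (fun j => F (Fin.natAdd a j)) (PiTensorProduct.tprod k y)) := by
  simp only [PiTensorProduct.map_tprod, concatEquiv_tprod]
  congr 1
  funext i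
  refine Fin.addCases (fun j => ?_) (fun j => ?_) i <;> simp

theorem stmt15_general (f g h : A →ₗ[k] A)
    (a b : ℕ) :
    Hcirc f g h (a + b) ∘ₗ (concatEquiv (k := k) (A := A) a b).toLinearMap =
      (concatEquiv (k := k) (A := A) a b).toLinearMap ∘ₗ
        (TensorProduct.map (Hcirc f g h a) LinearMap.id +
         TensorProduct.map (PiTensorProduct.map fun _ : Fin a => g ∘ₗ f)
           (Hcirc f g h b)) := by
  ext x y
  simp only [LinearMap.compMultilinearMap_apply, TensorProduct.AlgebraTensorModule.curry_apply,
    TensorProduct.curry_apply, LinearMap.coe_restrictScalars, LinearMap.comp_apply,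
    LinearEquiv.coe_coe, LinearMap.add_apply, TensorProduct.map_tmul,
    Hcirc.eq_sum_map_factor, LinearMap.coe_sum, Finset.sum_apply, map_sum, map_add,
    TensorProduct.sum_tmul, TensorProduct.tmul_sum, map_concatEquiv_tprod, Fin.sum_univ_add,
    Hcirc.factor_castAdd_castAdd, Hcirc.factor_castAdd_natAdd, Hcirc.factor_natAdd_castAdd,
    Hcirc.factor_natAdd_natAdd, PiTensorProduct.map_id]

theorem stmt15 (f g h : A →ₗ[k] A)
    (hfg : f ∘ₗ g = LinearMap.id)
    (hfh : f ∘ₗ h = 0) (hhg : h ∘ₗ g = 0) (hhh : h ∘ₗ h = 0)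
    (a b : ℕ) :
    Hcirc f g h (a + b) ∘ₗ (concatEquiv (k := k) (A := A) a b).toLinearMap =
      (concatEquiv (k := k) (A := A) a b).toLinearMap ∘ₗ
        (TensorProduct.map (Hcirc f g h a) LinearMap.id +
         TensorProduct.map (PiTensorProduct.map fun _ : Fin a => g ∘ₗ f)
           (Hcirc f g h b)) :=
  stmt15_general f g h a b
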